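/- Along solutions of Ẋ = (1-Y)X, Ẏ = (X - Y²/X)Y (the predator-prey system with positive feedback U = Y²/X), the function V(X,Y) = Ψ(1/X) + Ψ(Y/X) satisfies V̇ = -(X-1)²/X - (Y-X)²·Y/X², which is negative for all (X,Y) ≠ (1,1) with X, Y > 0; moreover U = Y²/X > 0 on the whole quadrant. -/

import Mathlib

/-!
Since `Ψ' S = 1 - 1/S`, the chain rule turns `V̇` into a rational function of `X, Y`, which
clears to the stated sum of two negated squares. These vanish together only when `X = 1` and
`Y = X`, i.e. at the equilibrium `(1, 1)`.
-/

noncomputable def Ψ (S : ℝ) : ℝ := S - 1 - Real.log S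

theorem hasDerivAt_Ψ {S : ℝ} (hS : S ≠ 0) : HasDerivAt Ψ (1 - S⁻¹) S :=
  ((hasDerivAt_id S).sub_const 1).sub (Real.hasDerivAt_log hS)

theorem hasDerivAt_Ψ_const_div {c x : ℝ} (hc : c ≠ 0) (hx : x ≠ 0) :
    HasDerivAt (fun x => Ψ (c / x)) ((1 - x / c) * (-c / x ^ 2)) x := by
  have hinner : HasDerivAt (fun x => c / x) (-c / x ^ 2) x := by
    simpa only [div_eq_mul_inv, neg_mul, mul_neg] using (hasDerivAt_inv hx).const_mul c
  have h := (hasDerivAt_Ψ (div_ne_zero hc hx)).comp x hinner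
  rwa [inv_div] at h

theorem hasDerivAt_Ψ_div_const {a y : ℝ} (ha : a ≠ 0) (hy : y ≠ 0) :
    HasDerivAt (fun y => Ψ (y / a)) ((1 - a / y) / a) y := by
  have h := (hasDerivAt_Ψ (div_ne_zero hy ha)).comp y ((hasDerivAt_id y).div_const a)
  rwa [inv_div, mul_one_div] at h

theorem dissipation_pos {X Y : ℝ} (hX : 0 < X) (hY : 0 < Y) (hne : (X, Y) ≠ (1, 1)) :
    0 < (X - 1) ^ 2 / X + (Y - X) ^ 2 * Y / X ^ 2 := by
  by_cases hX1 : X = 1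
  · subst hX1
    have hY1 : Y - 1 ≠ 0 := sub_ne_zero.mpr fun h => hne (by rw [h])
    have : 0 < (Y - 1) ^ 2 * Y / 1 ^ 2 := by positivity
    positivity
  · have hX1' : X - 1 ≠ 0 := sub_ne_zero.mpr hX1
    have : 0 < (X - 1) ^ 2 / X := by positivity
    positivity

theorem V_positive_backstepping (X Y : ℝ) (hX : 0 < X) (hY : 0 < Y) :
    (deriv (fun x => Ψ (1 / x) + Ψ (Y / x)) X * ((1 - Y) * X)
      + deriv (fun y => Ψ (1 / X) + Ψ (y / X)) Y * ((X - Y ^ 2 / X) * Y)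
      = -(X - 1) ^ 2 / X - (Y - X) ^ 2 * Y / X ^ 2)
    ∧ ((X, Y) ≠ (1, 1) → -(X - 1) ^ 2 / X - (Y - X) ^ 2 * Y / X ^ 2 < 0)
    ∧ 0 < Y ^ 2 / X := by
  have hdX : HasDerivAt (fun x => Ψ (1 / x) + Ψ (Y / x)) _ X :=
    (hasDerivAt_Ψ_const_div one_ne_zero hX.ne').add (hasDerivAt_Ψ_const_div hY.ne' hX.ne')
  have hdY := (hasDerivAt_Ψ_div_const hX.ne' hY.ne').const_add (Ψ (1 / X))
  refine ⟨?_, fun hne => ?_, by positivity⟩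
  · rw [hdX.deriv, hdY.deriv]
    field_simp
    ring
  · have := dissipation_pos hX hY hne
    rw [neg_div]
    linarith
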